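/- arXiv:2310.02454 — 3 statements merged into one kernel-verified Lean document; each statement's English description precedes it below -/
import Mathlib

section
/- A dimer model Q is path-consistent if and only if its universal cover dimer model Q̃ is path-consistent. -/
/-!
# Dimer models with boundary

A common framework for dimer models on oriented surfaces with boundary,
following "Consistency of dimer models on surfaces with boundary".

A dimer model is a quiver with faces (two families of faces, bounding
counterclockwise resp. clockwise cycles) embedded in an oriented surface
`S(Q)`.  The purely combinatorial data (quiver, faces, the dimer-algebra
relations identifying the two return paths of an internal arrow) is
formalized concretely; the topological data coming from the embedding into
the glued surface (the homotopy relation on paths, whether the surface is a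
sphere, orientation of simple cycle-walks) is axiomatized as part of the
structure `DimerModel`.
-/

/-- The data of a quiver: vertices, arrows, source and target maps. -/
structure QD where
  V : Type
  E : Type
  src : E → V
  tgt : E → V

namespace QD

/-- `IsChain Q v l w` : the list of arrows `l`, in order of traversal,
forms a composable path from `v` to `w`. -/
def IsChain (Q : QD) : Q.V → List Q.E → Q.V → Prop
  | v, [], w => v = w
  | v, e :: l, w => Q.src e = v ∧ Q.IsChain (Q.tgt e) l w

theorem IsChain.append {Q : QD} : ∀ {l l' : List Q.E} {v w x : Q.V},
    Q.IsChain v l w → Q.IsChain w l' x → Q.IsChain v (l ++ l') x := by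
  intro l
  induction l with
  | nil =>
    intro l' v w x h h'
    have hvw : v = w := h
    subst hvw
    exact h'
  | cons e l ih =>
    intro l' v w x h h'
    exact ⟨h.1, ih h.2 h'⟩

/-- A path from `v` to `w` in the quiver `Q`: a composable list of arrows,
in order of traversal. -/
structure Pth (Q : QD) (v w : Q.V) where
  edges : List Q.E
  chain : Q.IsChain v edges w

/-- The constant path at a vertex. -/
def Pth.nil (Q : QD) (v : Q.V) : Pth Q v v := ⟨[], rfl⟩

/-- Composition of paths: first `p`, then `q`. -/
def Pth.comp {Q : QD} {u v w : Q.V} (p : Pth Q u v) (q : Pth Q v w) : Pth Q u w :=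
  ⟨p.edges ++ q.edges, p.chain.append q.chain⟩

/-- `p` occurs in `q` as a subpath. -/
def IsSubpath {Q : QD} {v w a b : Q.V} (p : Pth Q v w) (q : Pth Q a b) : Prop :=
  ∃ (r : Pth Q a v) (s : Pth Q w b), q = r.comp (p.comp s)

/-- `p` occurs in `q` as a proper subpath. -/
def IsProperSubpath {Q : QD} {v w a b : Q.V} (p : Pth Q v w) (q : Pth Q a b) : Prop :=
  IsSubpath p q ∧ p.edges.length < q.edges.length

end QD

open QD

/-- A quiver with faces: the combinatorial data underlying a dimer model with
boundary.  Faces come in two families, counterclockwise (`FCC`) and clockwise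
(`FCL`), each face being given by its bounding cycle (a base vertex together
with the list of its arrows in order of traversal). -/
structure FQD extends QD where
  /-- counterclockwise faces -/
  FCC : Type
  /-- clockwise faces -/
  FCL : Type
  ccBase : FCC → V
  clBase : FCL → V
  /-- the bounding cycle of a counterclockwise face -/
  ccEdges : FCC → List E
  /-- the bounding cycle of a clockwise face -/
  clEdges : FCL → List E
  cc_chain : ∀ f, toQD.IsChain (ccBase f) (ccEdges f) (ccBase f)
  cl_chain : ∀ f, toQD.IsChain (clBase f) (clEdges f) (clBase f)
  cc_ne : ∀ f, ccEdges f ≠ []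
  cl_ne : ∀ f, clEdges f ≠ []
  /-- each arrow appears at most once in the bounding cycle of a face -/
  cc_nodup : ∀ f, (ccEdges f).Nodup
  cl_nodup : ∀ f, (clEdges f).Nodup
  /-- each arrow lies in at most one counterclockwise face -/
  cc_unique : ∀ e (f g : FCC), e ∈ ccEdges f → e ∈ ccEdges g → f = g
  /-- each arrow lies in at most one clockwise face -/
  cl_unique : ∀ e (f g : FCL), e ∈ clEdges f → e ∈ clEdges g → f = g
  /-- each arrow lies in at least one face -/
  mem_face : ∀ e : E, (∃ f, e ∈ ccEdges f) ∨ (∃ f, e ∈ clEdges f)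
  /-- local finiteness: every vertex is incident with finitely many arrows -/
  locally_finite : ∀ v : V, {e : E | src e = v ∨ tgt e = v}.Finite

namespace FQD

/-- An internal arrow: one lying in (exactly) two faces, i.e. in both a
counterclockwise and a clockwise face. -/
def IsInternal (Q : FQD) (e : Q.E) : Prop :=
  (∃ f, e ∈ Q.ccEdges f) ∧ (∃ f, e ∈ Q.clEdges f)

/-- A boundary arrow: one lying in only one face. -/
def IsBoundary (Q : FQD) (e : Q.E) : Prop := ¬ Q.IsInternal e

/-- An internal vertex: one incident with no boundary arrow. -/
def InternalVertex (Q : FQD) (v : Q.V) : Prop :=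
  ∀ e : Q.E, (Q.src e = v ∨ Q.tgt e = v) → Q.IsInternal e

/-- `r` is the counterclockwise return path `R_e^cc` of the arrow `e`: the
path from the head of `e` to the tail of `e` consisting of all arrows of the
counterclockwise face containing `e` except `e` itself. -/
def IsRetCC (Q : FQD) (e : Q.E) (r : Pth Q.toQD (Q.tgt e) (Q.src e)) : Prop :=
  ∃ (f : Q.FCC) (l1 l2 : List Q.E), Q.ccEdges f = l1 ++ e :: l2 ∧ r.edges = l2 ++ l1

/-- `r` is the clockwise return path `R_e^cl` of the arrow `e`. -/
def IsRetCL (Q : FQD) (e : Q.E) (r : Pth Q.toQD (Q.tgt e) (Q.src e)) : Prop :=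
  ∃ (f : Q.FCL) (l1 l2 : List Q.E), Q.clEdges f = l1 ++ e :: l2 ∧ r.edges = l2 ++ l1

/-- `l` is (the list of arrows of) a cycle traversing a counterclockwise face
once, i.e. a rotation of the bounding cycle of a counterclockwise face. -/
def IsCCFaceList (Q : FQD) (l : List Q.E) : Prop :=
  l ≠ [] ∧ ∃ (f : Q.FCC) (l1 l2 : List Q.E), Q.ccEdges f = l1 ++ l2 ∧ l = l2 ++ l1

/-- `l` is a cycle traversing a clockwise face once. -/
def IsCLFaceList (Q : FQD) (l : List Q.E) : Prop :=
  l ≠ [] ∧ ∃ (f : Q.FCL) (l1 l2 : List Q.E), Q.clEdges f = l1 ++ l2 ∧ l = l2 ++ l1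

/-- `l` is a cycle traversing a face once. -/
def IsFaceList (Q : FQD) (l : List Q.E) : Prop :=
  Q.IsCCFaceList l ∨ Q.IsCLFaceList l

/-- `c` is a face-path: a cycle traversing a counterclockwise face once. -/
def IsCCFacePath (Q : FQD) {v : Q.V} (c : Pth Q.toQD v v) : Prop :=
  Q.IsCCFaceList c.edges

/-- `c` is a face-path: a cycle traversing a clockwise face once. -/
def IsCLFacePath (Q : FQD) {v : Q.V} (c : Pth Q.toQD v v) : Prop :=
  Q.IsCLFaceList c.edges

/-- `c` is a face-path at `v`: a cycle starting and ending at `v` which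
travels around a face of `Q` once. -/
def IsFacePath (Q : FQD) {v : Q.V} (c : Pth Q.toQD v v) : Prop :=
  Q.IsFaceList c.edges

/-- A basic left-morph: replace one occurrence of the counterclockwise return
path `R_e^cc` of an internal arrow `e` inside a path by the clockwise return
path `R_e^cl`.  This generates the defining relations of the dimer algebra. -/
inductive LeftMorph (Q : FQD) : ∀ {v w : Q.V}, Pth Q.toQD v w → Pth Q.toQD v w → Prop
  | mk {e : Q.E} (hint : Q.IsInternal e)
      {rcc rcl : Pth Q.toQD (Q.tgt e) (Q.src e)}
      (hcc : Q.IsRetCC e rcc) (hcl : Q.IsRetCL e rcl)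
      {a b : Q.V} (pre : Pth Q.toQD a (Q.tgt e)) (post : Pth Q.toQD (Q.src e) b) :
      LeftMorph Q (pre.comp (rcc.comp post)) (pre.comp (rcl.comp post))

/-- A basic right-morph: replace one occurrence of `R_e^cl` by `R_e^cc`. -/
def RightMorph (Q : FQD) {v w : Q.V} (p q : Pth Q.toQD v w) : Prop :=
  Q.LeftMorph q p

/-- Path-equivalence: two paths are path-equivalent iff they are equal in the
dimer algebra `A_Q`, i.e. iff they are related by a finite sequence of basic
morphs. -/
inductive PEquiv (Q : FQD) : ∀ {v w : Q.V}, Pth Q.toQD v w → Pth Q.toQD v w → Prop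
  | of {v w : Q.V} {p q : Pth Q.toQD v w} : Q.LeftMorph p q → PEquiv Q p q
  | refl {v w : Q.V} (p : Pth Q.toQD v w) : PEquiv Q p p
  | symm {v w : Q.V} {p q : Pth Q.toQD v w} : PEquiv Q p q → PEquiv Q q p
  | trans {v w : Q.V} {p q r : Pth Q.toQD v w} : PEquiv Q p q → PEquiv Q q r → PEquiv Q p r

/-- `FacePow Q p m q` : the path `q` is `p` composed with `m` face-paths,
i.e. `q` represents `[f^m p]`. -/
inductive FacePow (Q : FQD) {v w : Q.V} (p : Pth Q.toQD v w) : ℕ → Pth Q.toQD v w → Prop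
  | zero : FacePow Q p 0 p
  | succ {m : ℕ} {q : Pth Q.toQD v w} (hq : FacePow Q p m q) {c : Pth Q.toQD w w}
      (hc : Q.IsFacePath c) : FacePow Q p (m + 1) (q.comp c)

/-- A path `p` is minimal if one cannot write `[p] = [q f^m]` for any `m ≥ 1`. -/
def Minimal (Q : FQD) {v w : Q.V} (p : Pth Q.toQD v w) : Prop :=
  ¬ ∃ (m : ℕ) (q q' : Pth Q.toQD v w), 1 ≤ m ∧ Q.FacePow q m q' ∧ Q.PEquiv p q'

end FQD

/-- A dimer model with boundary: a quiver with faces together with the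
(axiomatized) topology of the oriented surface `S(Q)` obtained by gluing the
faces: the homotopy (rel endpoints) relation `Htp` on paths, the proposition
`IsSphere` stating that `S(Q)` is a sphere, and the relation `SimpleCCW p q`
stating that the cycle-walk `q⁻¹ p` is a simple counterclockwise cycle-walk
on `S(Q)`. -/
structure DimerModel extends FQD where
  /-- homotopy of paths (rel endpoints) in the surface `S(Q)` -/
  Htp : ∀ {v w : V}, Pth toQD v w → Pth toQD v w → Prop
  htp_refl : ∀ {v w : V} (p : Pth toQD v w), Htp p p
  htp_symm : ∀ {v w : V} {p q : Pth toQD v w}, Htp p q → Htp q p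
  htp_trans : ∀ {v w : V} {p q r : Pth toQD v w}, Htp p q → Htp q r → Htp p r
  htp_comp : ∀ {u v w : V} {p p' : Pth toQD u v} {q q' : Pth toQD v w},
      Htp p p' → Htp q q' → Htp (p.comp q) (p'.comp q')
  /-- the two return paths of an internal arrow are homotopic in `S(Q)` -/
  htp_of_morph : ∀ {v w : V} {p q : Pth toQD v w}, FQD.LeftMorph toFQD p q → Htp p q
  /-- face-paths are null-homotopic in `S(Q)` -/
  htp_face : ∀ {v : V} {c : Pth toQD v v}, FQD.IsFacePath toFQD c → Htp c (Pth.nil toQD v)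
  /-- `S(Q)` is a sphere (without boundary) -/
  IsSphere : Prop
  /-- `SimpleCCW p q` : the paths `p, q` share only their endpoints and the
  cycle-walk `q⁻¹ p` is a simple counterclockwise cycle-walk on `S(Q)` -/
  SimpleCCW : ∀ {v w : V}, Pth toQD v w → Pth toQD v w → Prop
  /-- coherence of the orientation: the bounding cycle of a counterclockwise
  face is a simple counterclockwise cycle -/
  ccw_cc_face : ∀ {v : V} {c : Pth toQD v v}, FQD.IsCCFacePath toFQD c →
      SimpleCCW c (Pth.nil toQD v)

namespace DimerModel

/-- Paths in the underlying quiver of a dimer model. -/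
abbrev Path (Q : DimerModel) (v w : Q.V) : Type := Pth Q.toQD v w

/-- A dimer model is path-consistent if for all vertices `v, w` and every
homotopy class of paths in `S(Q)` from `v` to `w` (represented by a path
`p₀`), there is a minimal path `r` in that class, unique up to
path-equivalence, such that every path in the class is path-equivalent to
`f^m r` for a unique `m ≥ 0`. -/
def PathConsistent (Q : DimerModel) : Prop :=
  ∀ (v w : Q.V) (p₀ : Q.Path v w),
    ∃ r : Q.Path v w,
      FQD.Minimal Q.toFQD r ∧ Q.Htp r p₀ ∧
      (∀ r' : Q.Path v w, FQD.Minimal Q.toFQD r' → Q.Htp r' p₀ →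
        FQD.PEquiv Q.toFQD r r') ∧
      (∀ p : Q.Path v w, Q.Htp p p₀ →
        ∃! m : ℕ, ∃ q : Q.Path v w, FQD.FacePow Q.toFQD r m q ∧ FQD.PEquiv Q.toFQD p q)

/-- The dimer algebra `A_Q` is a cancellation algebra: equalities of paths in
`A_Q` may be cancelled on the left and on the right. -/
def Cancellative (Q : DimerModel) : Prop :=
  (∀ {u v w : Q.V} (a : Q.Path u v) (p q : Q.Path v w),
      FQD.PEquiv Q.toFQD (a.comp p) (a.comp q) → FQD.PEquiv Q.toFQD p q) ∧
  (∀ {u v w : Q.V} (p q : Q.Path u v) (b : Q.Path v w),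
      FQD.PEquiv Q.toFQD (p.comp b) (q.comp b) → FQD.PEquiv Q.toFQD p q)

/-- The surface `S(Q)` is simply connected: any two paths with the same
endpoints are homotopic. -/
def SimplyConnected (Q : DimerModel) : Prop :=
  ∀ {v w : Q.V} (p q : Q.Path v w), Q.Htp p q

end DimerModel

/-! ### Universal covers of dimer models -/

/-- A map of dimer models: maps of vertices and arrows commuting with sources
and targets. -/
structure CoverMap (Qt Q : DimerModel) where
  mapV : Qt.V → Q.V
  mapE : Qt.E → Q.E
  map_src : ∀ e, Q.src (mapE e) = mapV (Qt.src e)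
  map_tgt : ∀ e, Q.tgt (mapE e) = mapV (Qt.tgt e)

namespace CoverMap

theorem chain_map {Qt Q : DimerModel} (φ : CoverMap Qt Q) :
    ∀ {l : List Qt.E} {v w : Qt.V}, QD.IsChain Qt.toQD v l w →
      QD.IsChain Q.toQD (φ.mapV v) (l.map φ.mapE) (φ.mapV w) := by
  intro l
  induction l with
  | nil =>
    intro v w h
    have hvw : v = w := h
    subst hvw
    rfl
  | cons e l ih =>
    intro v w h
    refine ⟨?_, ?_⟩
    · rw [φ.map_src e]
      exact congrArg φ.mapV h.1
    · rw [φ.map_tgt e]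
      exact ih h.2

/-- The image of a path under a map of dimer models. -/
def mapPth {Qt Q : DimerModel} (φ : CoverMap Qt Q) {v w : Qt.V}
    (p : Pth Qt.toQD v w) : Pth Q.toQD (φ.mapV v) (φ.mapV w) :=
  ⟨p.edges.map φ.mapE, φ.chain_map p.chain⟩

end CoverMap

/-- A universal cover of the dimer model `Q`: a dimer model `Q̃` on the
universal cover of `S(Q)` obtained by lifting the vertices, arrows and faces
of `Q`, together with the standard facts of universal cover theory:
`S(Q̃)` is simply connected; paths of `Q` lift (uniquely given the initial
vertex); two paths of `Q` with a common starting point are homotopic in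
`S(Q)` iff their lifts from a common starting vertex have the same endpoint;
lifted paths with common endpoints descend to homotopic paths; path
equivalence (equality in the dimer algebra) holds upstairs iff it holds
downstairs; face-paths correspond to face-paths; and `S(Q̃)` is not a sphere
whenever `S(Q)` is not a sphere. -/
structure UnivCover (Qt Q : DimerModel) extends CoverMap Qt Q where
  simplyConnected : Qt.SimplyConnected
  surjV : Function.Surjective mapV
  not_sphere : ¬ Q.IsSphere → ¬ Qt.IsSphere
  lift_exists : ∀ {v w : Q.V} (p : Pth Q.toQD v w) (vt : Qt.V), mapV vt = v →
      ∃ (wt : Qt.V) (pt : Pth Qt.toQD vt wt), mapV wt = w ∧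
        (toCoverMap.mapPth pt).edges = p.edges
  descend_htp : ∀ {vt wt : Qt.V} (pt qt : Pth Qt.toQD vt wt),
      Q.Htp (toCoverMap.mapPth pt) (toCoverMap.mapPth qt)
  lift_htp : ∀ {vt wt₁ wt₂ : Qt.V} (pt : Pth Qt.toQD vt wt₁)
      (qt : Pth Qt.toQD vt wt₂)
      (q : Pth Q.toQD (mapV vt) (mapV wt₁)), q.edges = qt.edges.map mapE →
      Q.Htp (toCoverMap.mapPth pt) q → wt₁ = wt₂
  pequiv_iff : ∀ {vt wt : Qt.V} (pt qt : Pth Qt.toQD vt wt),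
      FQD.PEquiv Qt.toFQD pt qt ↔
        FQD.PEquiv Q.toFQD (toCoverMap.mapPth pt) (toCoverMap.mapPth qt)
  facepath_iff : ∀ {vt : Qt.V} (ct : Pth Qt.toQD vt vt),
      FQD.IsFacePath Qt.toFQD ct ↔ FQD.IsFacePath Q.toFQD (toCoverMap.mapPth ct)

namespace UnivCoverProof

open FQD DimerModel

/-- Paths with the same edge list are equal. -/
theorem Pth.ext' {Q : QD} {v w : Q.V} {p q : Pth Q v w} (h : p.edges = q.edges) :
    p = q := by
  cases p; cases q; simp_all

theorem mapPth_comp {Qt Q : DimerModel} (φ : CoverMap Qt Q) {u v w : Qt.V}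
    (p : Pth Qt.toQD u v) (q : Pth Qt.toQD v w) :
    φ.mapPth (p.comp q) = (φ.mapPth p).comp (φ.mapPth q) := by
  apply Pth.ext'
  simp [CoverMap.mapPth, Pth.comp]

/-- Path-equivalent paths are homotopic. -/
theorem htp_of_pequiv {Q : DimerModel} {v w : Q.V} {p q : Q.Path v w}
    (h : FQD.PEquiv Q.toFQD p q) : Q.Htp p q := by
  induction h with
  | of h => exact Q.htp_of_morph h
  | refl p => exact Q.htp_refl p
  | symm _ ih => exact Q.htp_symm ih
  | trans _ _ ih1 ih2 => exact Q.htp_trans ih1 ih2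

/-- A face power of `p` is homotopic to `p`. -/
theorem htp_of_facePow {Q : DimerModel} {v w : Q.V} {p : Q.Path v w} {m : ℕ}
    {q : Q.Path v w} (h : FQD.FacePow Q.toFQD p m q) : Q.Htp q p := by
  induction h with
  | zero => exact Q.htp_refl p
  | succ hq hc ih =>
    rename_i q c
    have h1 : Q.Htp (q.comp c) (q.comp (Pth.nil Q.toQD w)) :=
      Q.htp_comp (Q.htp_refl q) (Q.htp_face hc)
    have h2 : q.comp (Pth.nil Q.toQD w) = q := by
      apply Pth.ext'; simp [Pth.comp, Pth.nil]
    rw [h2] at h1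
    exact Q.htp_trans h1 ih

/-- Any path downstairs homotopic to the image of a path upstairs lifts,
with the same endpoints. -/
theorem liftPath {Qt Q : DimerModel} (π : UnivCover Qt Q) {vt wt : Qt.V}
    (pt : Pth Qt.toQD vt wt) (p : Pth Q.toQD (π.mapV vt) (π.mapV wt))
    (h : Q.Htp (π.toCoverMap.mapPth pt) p) :
    ∃ qt : Pth Qt.toQD vt wt, π.toCoverMap.mapPth qt = p := by
  obtain ⟨wt', qt', hmw', he⟩ := π.lift_exists p vt rfl
  have hend : wt = wt' := π.lift_htp pt qt' p (by
    have : (π.toCoverMap.mapPth qt').edges = qt'.edges.map π.mapE := rfl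
    rw [← this, he]) h
  subst hend
  exact ⟨qt', Pth.ext' he⟩

/-- Face powers push down along the cover map. -/
theorem facePow_map {Qt Q : DimerModel} (π : UnivCover Qt Q) {vt wt : Qt.V}
    {rt : Pth Qt.toQD vt wt} {m : ℕ} {qt : Pth Qt.toQD vt wt}
    (h : FQD.FacePow Qt.toFQD rt m qt) :
    FQD.FacePow Q.toFQD (π.toCoverMap.mapPth rt) m (π.toCoverMap.mapPth qt) := by
  induction h with
  | zero => exact FQD.FacePow.zero
  | succ hq hc ih =>
    rename_i q c
    rw [mapPth_comp]
    exact FQD.FacePow.succ ih ((π.facepath_iff c).mp hc)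

/-- Face powers lift along the cover map, given a lift of the base path. -/
theorem facePow_lift {Qt Q : DimerModel} (π : UnivCover Qt Q) {vt wt : Qt.V}
    {r : Pth Q.toQD (π.mapV vt) (π.mapV wt)} {m : ℕ}
    {q : Pth Q.toQD (π.mapV vt) (π.mapV wt)}
    (h : FQD.FacePow Q.toFQD r m q) (rt : Pth Qt.toQD vt wt)
    (hrt : π.toCoverMap.mapPth rt = r) :
    ∃ qt : Pth Qt.toQD vt wt, FQD.FacePow Qt.toFQD rt m qt ∧
      π.toCoverMap.mapPth qt = q := by
  induction h with
  | zero => exact ⟨rt, FQD.FacePow.zero, hrt⟩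
  | succ hq hc ih =>
    rename_i q₀ c
    obtain ⟨qt₀, hfp, hqt₀⟩ := ih
    -- lift the face path c at wt
    have hnil : π.toCoverMap.mapPth (Pth.nil Qt.toQD wt) = Pth.nil Q.toQD (π.mapV wt) :=
      Pth.ext' rfl
    have hhtp : Q.Htp (π.toCoverMap.mapPth (Pth.nil Qt.toQD wt)) c := by
      rw [hnil]; exact Q.htp_symm (Q.htp_face hc)
    obtain ⟨ct, hct⟩ := liftPath π (Pth.nil Qt.toQD wt) c hhtp
    have hcf : FQD.IsFacePath Qt.toFQD ct := by
      rw [π.facepath_iff ct, hct]; exact hc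
    refine ⟨qt₀.comp ct, FQD.FacePow.succ hfp hcf, ?_⟩
    rw [mapPth_comp, hqt₀, hct]

/-- Minimality pushes down: if the image is minimal then so is the path. -/
theorem minimal_of_map {Qt Q : DimerModel} (π : UnivCover Qt Q) {vt wt : Qt.V}
    {rt : Pth Qt.toQD vt wt}
    (h : FQD.Minimal Q.toFQD (π.toCoverMap.mapPth rt)) :
    FQD.Minimal Qt.toFQD rt := by
  intro ⟨m, q, q', hm, hfp, heq⟩
  exact h ⟨m, π.toCoverMap.mapPth q, π.toCoverMap.mapPth q', hm, facePow_map π hfp,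
    (π.pequiv_iff rt q').mp heq⟩

/-- Minimality pulls back: if a path upstairs is minimal then so is its image. -/
theorem minimal_map {Qt Q : DimerModel} (π : UnivCover Qt Q) {vt wt : Qt.V}
    {rt : Pth Qt.toQD vt wt} (h : FQD.Minimal Qt.toFQD rt) :
    FQD.Minimal Q.toFQD (π.toCoverMap.mapPth rt) := by
  intro ⟨m, q, q', hm, hfp, heq⟩
  -- obtain a lift of q
  have hh1 : Q.Htp (π.toCoverMap.mapPth rt) q' := htp_of_pequiv heq
  have hh2 : Q.Htp q' q := htp_of_facePow hfp
  obtain ⟨qt, hqt⟩ := liftPath π rt q (Q.htp_trans hh1 hh2)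
  obtain ⟨qt', hfp', hqt'⟩ := facePow_lift π hfp qt hqt
  refine h ⟨m, qt, qt', hm, hfp', ?_⟩
  rw [π.pequiv_iff rt qt', hqt']
  exact heq

end UnivCoverProof

open UnivCoverProof

/-- **Proposition 2.13 (Q-consistent-iff-hat-Q-consistent).**
A dimer model `Q` is path-consistent if and only if its universal cover dimer
model `Q̃` is path-consistent. -/
theorem pathConsistent_iff_univCover (Q Qt : DimerModel) (π : UnivCover Qt Q) :
    Q.PathConsistent ↔ Qt.PathConsistent := by
  constructor
  · -- Q consistent → Qt consistent
    intro hQ vt wt pt₀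
    obtain ⟨r, hrmin, hrhtp, hruniq, hrm⟩ :=
      hQ (π.mapV vt) (π.mapV wt) (π.toCoverMap.mapPth pt₀)
    obtain ⟨rt, hrt⟩ := liftPath π pt₀ r (Q.htp_symm hrhtp)
    refine ⟨rt, ?_, π.simplyConnected rt pt₀, ?_, ?_⟩
    · exact minimal_of_map π (hrt ▸ hrmin)
    · intro rt' hmin' _
      have h1 : FQD.PEquiv Q.toFQD r (π.toCoverMap.mapPth rt') :=
        hruniq (π.toCoverMap.mapPth rt') (minimal_map π hmin') (π.descend_htp rt' pt₀)
      rw [π.pequiv_iff rt rt', hrt]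
      exact h1
    · intro pt _
      obtain ⟨m, ⟨q, hq, hpe⟩, huniq⟩ :=
        hrm (π.toCoverMap.mapPth pt) (π.descend_htp pt pt₀)
      refine ⟨m, ?_, ?_⟩
      · obtain ⟨qt, hfp, hqt⟩ := facePow_lift π hq rt hrt
        refine ⟨qt, hfp, ?_⟩
        rw [π.pequiv_iff pt qt, hqt]
        exact hpe
      · rintro m' ⟨qt', hfp', hpe'⟩
        refine huniq m' ⟨π.toCoverMap.mapPth qt', ?_, (π.pequiv_iff pt qt').mp hpe'⟩
        have := facePow_map π hfp'
        rwa [hrt] at this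
  · -- Qt consistent → Q consistent
    intro hQt v w p₀
    obtain ⟨vt, hv⟩ := π.surjV v
    subst hv
    obtain ⟨wt, pt₀, hw, hedges⟩ := π.lift_exists p₀ vt rfl
    subst hw
    have hp₀ : π.toCoverMap.mapPth pt₀ = p₀ := Pth.ext' hedges
    subst hp₀
    obtain ⟨rt, hmin, _, huniq, hm⟩ := hQt vt wt pt₀
    refine ⟨π.toCoverMap.mapPth rt, minimal_map π hmin, π.descend_htp rt pt₀, ?_, ?_⟩
    · intro r' hmin' hhtp'
      obtain ⟨rt', hrt'⟩ := liftPath π pt₀ r' (Q.htp_symm hhtp')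
      have h1 : FQD.PEquiv Qt.toFQD rt rt' :=
        huniq rt' (minimal_of_map π (hrt' ▸ hmin')) (π.simplyConnected rt' pt₀)
      have := (π.pequiv_iff rt rt').mp h1
      rwa [hrt'] at this
    · intro p hhtp
      obtain ⟨pt, hpt⟩ := liftPath π pt₀ p (Q.htp_symm hhtp)
      obtain ⟨m, ⟨qt, hfp, hpe⟩, huniqm⟩ := hm pt (π.simplyConnected pt pt₀)
      refine ⟨m, ⟨π.toCoverMap.mapPth qt, facePow_map π hfp, ?_⟩, ?_⟩
      · have := (π.pequiv_iff pt qt).mp hpe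
        rwa [hpt] at this
      · rintro m' ⟨q', hfp', hpe'⟩
        obtain ⟨qt', hfp'', hqt'⟩ := facePow_lift π hfp' rt rfl
        refine huniqm m' ⟨qt', hfp'', ?_⟩
        rw [π.pequiv_iff pt qt', hpt, hqt']
        exact hpe'
end

section
/- The dimer algebra A_Q is a cancellation algebra if and only if the dimer algebra A_{Q̃} of the universal cover dimer model is a cancellation algebra. -/
open QD

/-! ### Auxiliary lemmas -/

theorem pthExt {Q : QD} {v w : Q.V} {p q : Pth Q v w} (h : p.edges = q.edges) : p = q := by
  cases p with
  | mk pe pc =>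
    cases q with
    | mk qe qc =>
      dsimp at h
      subst h
      rfl

theorem chainSplit {Q : QD} : ∀ (l1 : List Q.E) {l2 : List Q.E} {v w : Q.V},
    Q.IsChain v (l1 ++ l2) w → ∃ x, Q.IsChain v l1 x ∧ Q.IsChain x l2 w := by
  intro l1
  induction l1 with
  | nil => intro l2 v w h; exact ⟨v, rfl, h⟩
  | cons e l ih =>
    intro l2 v w h
    obtain ⟨x, h1, h2⟩ := ih h.2
    exact ⟨x, ⟨h.1, h1⟩, h2⟩

/-- Every arrow `e` has a "return path" `r` (the rest of a face containing `e`)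
such that `e ⬝ r` is a face-path, hence null-homotopic. -/
theorem DimerModel.arrowInv (Q : DimerModel) (e : Q.E) :
    ∃ r : Pth Q.toQD (Q.tgt e) (Q.src e),
      Q.Htp (Pth.comp ⟨[e], ⟨rfl, rfl⟩⟩ r) (Pth.nil Q.toQD (Q.src e)) := by
  rcases Q.mem_face e with ⟨f, hf⟩ | ⟨f, hf⟩
  · obtain ⟨l1, l2, hsplit⟩ := List.append_of_mem hf
    have hc := Q.cc_chain f
    rw [hsplit] at hc
    obtain ⟨x, h1, hsrc, h3⟩ := chainSplit l1 hc
    subst hsrc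
    refine ⟨⟨l2 ++ l1, h3.append h1⟩, Q.htp_face ?_⟩
    exact Or.inl ⟨by simp [Pth.comp], f, l1, e :: l2, hsplit, by simp [Pth.comp]⟩
  · obtain ⟨l1, l2, hsplit⟩ := List.append_of_mem hf
    have hc := Q.cl_chain f
    rw [hsplit] at hc
    obtain ⟨x, h1, hsrc, h3⟩ := chainSplit l1 hc
    subst hsrc
    refine ⟨⟨l2 ++ l1, h3.append h1⟩, Q.htp_face ?_⟩
    exact Or.inr ⟨by simp [Pth.comp], f, l1, e :: l2, hsplit, by simp [Pth.comp]⟩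

/-- Every path has a homotopy right-inverse. -/
theorem DimerModel.chainInv (Q : DimerModel) : ∀ (l : List Q.E) (v w : Q.V)
    (h : QD.IsChain Q.toQD v l w), ∃ r : Pth Q.toQD w v,
      Q.Htp (Pth.comp ⟨l, h⟩ r) (Pth.nil Q.toQD v) := by
  intro l
  induction l with
  | nil =>
    intro v w h
    have hvw : v = w := h
    subst hvw
    refine ⟨Pth.nil Q.toQD v, ?_⟩
    have hc : (Pth.comp ⟨[], h⟩ (Pth.nil Q.toQD v)) = Pth.nil Q.toQD v := pthExt rfl
    rw [hc]
    exact Q.htp_refl _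
  | cons e l ih =>
    intro v w h
    have hsrc : Q.src e = v := h.1
    subst hsrc
    obtain ⟨r, hr⟩ := ih (Q.tgt e) w h.2
    obtain ⟨re, hre⟩ := Q.arrowInv e
    refine ⟨r.comp re, ?_⟩
    have key : (Pth.comp ⟨e :: l, h⟩ (r.comp re) : Pth Q.toQD (Q.src e) (Q.src e)) =
        Pth.comp (⟨[e], ⟨rfl, rfl⟩⟩ : Pth Q.toQD (Q.src e) (Q.tgt e))
          (Pth.comp (Pth.comp ⟨l, h.2⟩ r) re) := pthExt (by simp [Pth.comp])
    rw [key]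
    have h1 : Q.Htp (Pth.comp (Pth.comp ⟨l, h.2⟩ r) re)
        (Pth.comp (Pth.nil Q.toQD (Q.tgt e)) re) := Q.htp_comp hr (Q.htp_refl re)
    have h2 : (Pth.comp (Pth.nil Q.toQD (Q.tgt e)) re) = re := pthExt (by simp [Pth.comp, Pth.nil])
    rw [h2] at h1
    exact Q.htp_trans (Q.htp_comp (Q.htp_refl _) h1) hre

/-- Homotopy may be cancelled on the right (in the fundamental groupoid). -/
theorem DimerModel.htpCancelRight (Q : DimerModel) {u v w : Q.V}
    (p q : Pth Q.toQD u v) (b : Pth Q.toQD v w)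
    (h : Q.Htp (p.comp b) (q.comp b)) : Q.Htp p q := by
  obtain ⟨b', hb⟩ := Q.chainInv b.edges v w b.chain
  have hbeq : (⟨b.edges, b.chain⟩ : Pth Q.toQD v w) = b := pthExt rfl
  rw [hbeq] at hb
  have h1 : Q.Htp ((p.comp b).comp b') ((q.comp b).comp b') := Q.htp_comp h (Q.htp_refl b')
  have e1 : (p.comp b).comp b' = p.comp (b.comp b') := pthExt (by simp [Pth.comp])
  have e2 : (q.comp b).comp b' = q.comp (b.comp b') := pthExt (by simp [Pth.comp])
  rw [e1, e2] at h1
  have h2 : Q.Htp (p.comp (b.comp b')) p := by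
    have h' := Q.htp_comp (Q.htp_refl p) hb
    have e3 : p.comp (Pth.nil Q.toQD v) = p := pthExt (by simp [Pth.comp, Pth.nil])
    rwa [e3] at h'
  have h3 : Q.Htp (q.comp (b.comp b')) q := by
    have h' := Q.htp_comp (Q.htp_refl q) hb
    have e3 : q.comp (Pth.nil Q.toQD v) = q := pthExt (by simp [Pth.comp, Pth.nil])
    rwa [e3] at h'
  exact Q.htp_trans (Q.htp_symm h2) (Q.htp_trans h1 h3)

/-- Path-equivalent paths are homotopic. -/
theorem DimerModel.pequivHtp (Q : DimerModel) {v w : Q.V} {p q : Pth Q.toQD v w}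
    (h : FQD.PEquiv Q.toFQD p q) : Q.Htp p q := by
  induction h with
  | of hm => exact Q.htp_of_morph hm
  | refl p => exact Q.htp_refl p
  | symm _ ih => exact Q.htp_symm ih
  | trans _ _ ih1 ih2 => exact Q.htp_trans ih1 ih2

theorem CoverMap.mapPth_comp {Qt Q : DimerModel} (φ : CoverMap Qt Q) {u v w : Qt.V}
    (p : Pth Qt.toQD u v) (q : Pth Qt.toQD v w) :
    φ.mapPth (p.comp q) = (φ.mapPth p).comp (φ.mapPth q) :=
  pthExt (by simp [CoverMap.mapPth, Pth.comp])

/-- **Lemma 2.15 (Q-canc-iff-hat-Q-canc).**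
The dimer algebra `A_Q` is a cancellation algebra if and only if the dimer
algebra `A_{Q̃}` of the universal cover dimer model is a cancellation
algebra. -/
theorem cancellative_iff_univCover (Q Qt : DimerModel) (π : UnivCover Qt Q) :
    Q.Cancellative ↔ Qt.Cancellative := by
  constructor
  · rintro ⟨hl, hr⟩
    constructor
    · intro u v w a p q h
      have h' := (π.pequiv_iff _ _).1 h
      rw [CoverMap.mapPth_comp, CoverMap.mapPth_comp] at h'
      exact (π.pequiv_iff _ _).2 (hl _ _ _ h')
    · intro u v w p q b h
      have h' := (π.pequiv_iff _ _).1 h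
      rw [CoverMap.mapPth_comp, CoverMap.mapPth_comp] at h'
      exact (π.pequiv_iff _ _).2 (hr _ _ _ h')
  · rintro ⟨hlt, hrt⟩
    constructor
    · intro u v w a p q h
      obtain ⟨ut, hu⟩ := π.surjV u
      subst hu
      obtain ⟨vt, at', hv, hae⟩ := π.lift_exists a ut rfl
      subst hv
      obtain ⟨wt1, pt, hw1, hpe⟩ := π.lift_exists p vt rfl
      subst hw1
      obtain ⟨wt2, qt, hw2, hqe⟩ := π.lift_exists q vt rfl
      have hA : π.toCoverMap.mapPth at' = a := pthExt hae
      have hP : π.toCoverMap.mapPth pt = p := pthExt hpe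
      have hhtp : Q.Htp (π.toCoverMap.mapPth (at'.comp pt)) (a.comp q) := by
        rw [CoverMap.mapPth_comp, hA, hP]
        exact Q.pequivHtp h
      have hedges : (a.comp q).edges = ((at'.comp qt).edges).map π.toCoverMap.mapE := by
        show a.edges ++ q.edges = (at'.edges ++ qt.edges).map _
        rw [List.map_append, ← hae, ← hqe]
        rfl
      have hwt : wt1 = wt2 := π.lift_htp (at'.comp pt) (at'.comp qt) (a.comp q) hedges hhtp
      subst hwt
      have hQ' : π.toCoverMap.mapPth qt = q := pthExt hqe
      have hup : FQD.PEquiv Qt.toFQD (at'.comp pt) (at'.comp qt) := by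
        refine (π.pequiv_iff _ _).2 ?_
        rw [CoverMap.mapPth_comp, CoverMap.mapPth_comp, hA, hP, hQ']
        exact h
      have hres := (π.pequiv_iff pt qt).1 (hlt at' pt qt hup)
      rwa [hP, hQ'] at hres
    · intro u v w p q b h
      have hpq : Q.Htp p q := Q.htpCancelRight p q b (Q.pequivHtp h)
      obtain ⟨ut, hu⟩ := π.surjV u
      subst hu
      obtain ⟨vt1, pt, hv1, hpe⟩ := π.lift_exists p ut rfl
      subst hv1
      obtain ⟨vt2, qt, hv2, hqe⟩ := π.lift_exists q ut rfl
      have hP : π.toCoverMap.mapPth pt = p := pthExt hpe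
      have hedges : q.edges = qt.edges.map π.toCoverMap.mapE := hqe.symm
      have hvt : vt1 = vt2 := π.lift_htp pt qt q hedges (by rw [hP]; exact hpq)
      subst hvt
      have hQ' : π.toCoverMap.mapPth qt = q := pthExt hqe
      obtain ⟨wt, bt, hw, hbe⟩ := π.lift_exists b vt1 rfl
      subst hw
      have hB : π.toCoverMap.mapPth bt = b := pthExt hbe
      have hup : FQD.PEquiv Qt.toFQD (pt.comp bt) (qt.comp bt) := by
        refine (π.pequiv_iff _ _).2 ?_
        rw [CoverMap.mapPth_comp, CoverMap.mapPth_comp, hP, hQ', hB]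
        exact h
      have hres := (π.pequiv_iff pt qt).1 (hrt pt qt bt hup)
      rwa [hP, hQ'] at hres
end

section
/- If Q is a finite strongly consistent dimer model, then the dimer algebra A_Q (and hence also the completed dimer algebra Â_Q) admits a Z-grading in which every nonconstant path has positive degree and every face-path has the same degree. -/
open QD

/-! ### Perfect matchings -/

namespace FQD

/-- A perfect matching of a dimer model: a set of arrows containing exactly
one arrow of every face. -/
def IsPerfectMatching (Q : FQD) (M : Set Q.E) : Prop :=
  (∀ f : Q.FCC, ∃! e : Q.E, e ∈ M ∧ e ∈ Q.ccEdges f) ∧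
  (∀ f : Q.FCL, ∃! e : Q.E, e ∈ M ∧ e ∈ Q.clEdges f)

/-- A dimer model is nondegenerate if every arrow is contained in a perfect
matching. -/
def Nondegenerate (Q : FQD) : Prop :=
  ∀ e : Q.E, ∃ M : Set Q.E, Q.IsPerfectMatching M ∧ e ∈ M

open Classical in
/-- The intersection number of a list of arrows with a set `M` of arrows:
the number of its members lying in `M`, counted with multiplicity. -/
noncomputable def mcount (Q : FQD) (M : Set Q.E) : List Q.E → ℕ
  | [] => 0
  | e :: l => (if e ∈ M then 1 else 0) + Q.mcount M l

end FQD

namespace DimerModel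

/-- A dimer model (not on a sphere) is weakly consistent if it is
path-consistent (equivalently, strand-consistent; equivalently, its dimer
algebra is cancellative). -/
def WeaklyConsistent (Q : DimerModel) : Prop :=
  ¬ Q.IsSphere ∧ Q.PathConsistent

/-- A dimer model is strongly consistent if it is weakly consistent and
nondegenerate. -/
def StronglyConsistent (Q : DimerModel) : Prop :=
  Q.WeaklyConsistent ∧ FQD.Nondegenerate Q.toFQD

end DimerModel

namespace DimerModel

/-- The degree of a path with respect to a degree function on arrows. -/
def degSum (Q : DimerModel) (d : Q.E → ℤ) {v w : Q.V} (p : Q.Path v w) : ℤ :=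
  (p.edges.map d).sum

end DimerModel


/-!
The grading is `d e = #{a | e ∈ M a}`, where `M a` is a perfect matching containing the arrow
`a` (nondegeneracy). Each perfect matching meets every face exactly once, so every face cycle has
the same `d`-degree `N`; hence both return paths of an arrow `e` have degree `N - d e`, and the
defining relations of `A_Q` are homogeneous. Every arrow has degree at least one, since `e ∈ M e`.
-/

theorem List.sum_map_finset_sum {α ι : Type*} (s : Finset ι) (f : ι → α → ℤ) (l : List α) :
    (l.map (∑ i ∈ s, f i)).sum = ∑ i ∈ s, (l.map (f i)).sum := by
  induction l with
  | nil => simp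
  | cons a l ih => simp [ih, Finset.sum_add_distrib]

theorem List.sum_map_indicator_eq_one {α : Type*} {S : Set α} {l : List α} (hl : l.Nodup)
    (hS : ∃! x, x ∈ S ∧ x ∈ l) : (l.map (S.indicator 1)).sum = (1 : ℤ) := by
  classical
  obtain ⟨x, ⟨hxS, hxl⟩, hx⟩ := hS
  rw [← List.sum_toFinset _ hl, Finset.sum_eq_single x]
  · simp [hxS]
  · intro y hy hyx
    exact Set.indicator_of_notMem (fun hyS => hyx (hx y ⟨hyS, List.mem_toFinset.mp hy⟩)) _
  · intro hx'
    exact absurd (List.mem_toFinset.mpr hxl) hx'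

namespace FQD

theorem finite_arrows (Q : FQD) [Finite Q.V] : Finite Q.E :=
  Set.finite_univ_iff.mp <| (Set.finite_iUnion Q.locally_finite).subset
    fun e _ => Set.mem_iUnion.2 ⟨Q.src e, Or.inl rfl⟩

def HasFaceDegree (Q : FQD) (d : Q.E → ℤ) (N : ℤ) : Prop :=
  (∀ f, ((Q.ccEdges f).map d).sum = N) ∧ (∀ f, ((Q.clEdges f).map d).sum = N)

theorem IsPerfectMatching.hasFaceDegree_indicator {Q : FQD} {M : Set Q.E}
    (hM : Q.IsPerfectMatching M) : Q.HasFaceDegree (M.indicator 1) 1 :=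
  ⟨fun f => List.sum_map_indicator_eq_one (Q.cc_nodup f) (hM.1 f),
    fun f => List.sum_map_indicator_eq_one (Q.cl_nodup f) (hM.2 f)⟩

theorem hasFaceDegree_sum {Q : FQD} {ι : Type*} (s : Finset ι) {d : ι → Q.E → ℤ} {N : ι → ℤ}
    (hd : ∀ i ∈ s, Q.HasFaceDegree (d i) (N i)) :
    Q.HasFaceDegree (∑ i ∈ s, d i) (∑ i ∈ s, N i) :=
  ⟨fun f => by
    rw [List.sum_map_finset_sum]
    exact Finset.sum_congr rfl fun i hi => (hd i hi).1 f,
   fun f => by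
    rw [List.sum_map_finset_sum]
    exact Finset.sum_congr rfl fun i hi => (hd i hi).2 f⟩

namespace HasFaceDegree

variable {Q : FQD} {d : Q.E → ℤ} {N : ℤ}

theorem sum_map_of_isFaceList (hd : Q.HasFaceDegree d N) {l : List Q.E}
    (hl : Q.IsFaceList l) : (l.map d).sum = N := by
  rcases hl with ⟨-, f, l₁, l₂, hf, rfl⟩ | ⟨-, f, l₁, l₂, hf, rfl⟩
  · rw [← hd.1 f, hf]
    simp [add_comm]
  · rw [← hd.2 f, hf]
    simp [add_comm]

theorem sum_map_retCC (hd : Q.HasFaceDegree d N) {e : Q.E}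
    {r : Pth Q.toQD (Q.tgt e) (Q.src e)} (hr : Q.IsRetCC e r) :
    (r.edges.map d).sum = N - d e := by
  obtain ⟨f, l₁, l₂, hf, hr⟩ := hr
  rw [← hd.1 f, hf, hr]
  simp only [List.map_append, List.map_cons, List.sum_append, List.sum_cons]
  ring

theorem sum_map_retCL (hd : Q.HasFaceDegree d N) {e : Q.E}
    {r : Pth Q.toQD (Q.tgt e) (Q.src e)} (hr : Q.IsRetCL e r) :
    (r.edges.map d).sum = N - d e := by
  obtain ⟨f, l₁, l₂, hf, hr⟩ := hr
  rw [← hd.2 f, hf, hr]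
  simp only [List.map_append, List.map_cons, List.sum_append, List.sum_cons]
  ring

theorem sum_map_eq_of_pEquiv (hd : Q.HasFaceDegree d N) {v w : Q.V}
    {p q : Pth Q.toQD v w} (h : Q.PEquiv p q) :
    (p.edges.map d).sum = (q.edges.map d).sum := by
  induction h with
  | of h =>
    obtain ⟨-, hcc, hcl, pre, post⟩ := h
    simp only [Pth.comp, List.map_append, List.sum_append, hd.sum_map_retCC hcc,
      hd.sum_map_retCL hcl]
  | refl => rfl
  | symm _ ih => exact ih.symm
  | trans _ _ ih₁ ih₂ => exact ih₁.trans ih₂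

end HasFaceDegree

end FQD

/-- **Lemma 6.5 (posgrad).**
If `Q` is a finite strongly consistent dimer model, then the dimer algebra
`A_Q` (and hence also the completed dimer algebra `Â_Q`) admits a
`ℤ`-grading (a degree function on arrows, inducing well-defined degrees on
elements of `A_Q`) such that every nonconstant path has positive degree and
every face-path has the same degree. -/
theorem exists_positive_grading (Q : DimerModel) (hfin : Finite Q.V)
    (hsc : Q.StronglyConsistent) :
    ∃ d : Q.E → ℤ,
      (∀ (v w : Q.V) (p q : Q.Path v w), FQD.PEquiv Q.toFQD p q →
        Q.degSum d p = Q.degSum d q) ∧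
      (∀ (v w : Q.V) (p : Q.Path v w), p.edges ≠ [] → 0 < Q.degSum d p) ∧
      (∃ N : ℤ, ∀ (v : Q.V) (c : Q.Path v v), FQD.IsFacePath Q.toFQD c →
        Q.degSum d c = N) := by
  have := Q.finite_arrows
  have := Fintype.ofFinite Q.E
  choose M hM heM using hsc.2
  set d : Q.E → ℤ := ∑ a, (M a).indicator 1
  have hd : Q.HasFaceDegree d (∑ _ : Q.E, 1) :=
    FQD.hasFaceDegree_sum _ fun a _ => (hM a).hasFaceDegree_indicator
  have hpos (e : Q.E) : 0 < d e :=
    calc (0 : ℤ) < (M e).indicator 1 e := by simp [heM e]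
      _ ≤ d e := by
        simp only [d, Finset.sum_apply]
        exact Finset.single_le_sum (fun a _ => Set.indicator_nonneg (by simp) _)
          (Finset.mem_univ e)
  refine ⟨d, fun v w p q h => hd.sum_map_eq_of_pEquiv h, fun v w p hp => ?_,
    _, fun v c hc => hd.sum_map_of_isFaceList hc⟩
  exact List.sum_pos _ (by simpa using fun e _ => hpos e) (by simpa using hp)
end
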